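/- For every binary pattern p of length m and every k ≥ 1, any binary word w that is primitive with respect to p and satisfies c_p(w) = k has length at most m + (k−1)·m; in particular, the set prim_{n,p}(k) of primitive words of length at most n with exactly k occurrences of p is finite, and B_{n,p}(k) = Σ_{w ∈ prim_{n,p}(k)} (number of words of length n whose primitive reduction with respect to p equals w). -/

import Mathlib

/-- An occurrence of the pattern `p` in the word `w`: a strictly increasing
index tuple whose corresponding subsequence of `w` equals `p`. -/
def Occ (p w : List Bool) : Type :=
  {f : Fin p.length → Fin w.length // StrictMono f ∧ ∀ j, w.get (f j) = p.get j}

/-- `numOcc p w` is `c_p(w)`, the number of occurrences of `p` in `w`. -/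
noncomputable def numOcc (p w : List Bool) : ℕ := Nat.card (Occ p w)

/-- `w` is primitive with respect to `p` if every index of `w` is contained in
some occurrence of `p` in `w`. -/
def Primitive (p w : List Bool) : Prop :=
  ∀ i : Fin w.length, ∃ g : Occ p w, ∃ j, g.1 j = i

open Classical in
/-- The primitive reduction of `w` with respect to `p`: delete all indices of `w`
not contained in any occurrence of `p`. -/
noncomputable def reduce (p w : List Bool) : List Bool :=
  (((List.finRange w.length).filter
    fun i => decide (∃ g : Occ p w, ∃ j, g.1 j = i)).map w.get)

/-!
Every letter of a primitive word lies in one of its `k` occurrences of `p`, each of which covers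
`|p|` letters, so the word has length at most `k |p|`. The primitive reduction of `v` is the
subsequence of `v` on the covered indices; since every occurrence of `p` in `v` lives on those
indices, the occurrences of `p` in `v` and in its reduction correspond bijectively. Hence the
reduction is primitive with the same number of occurrences, and sorting the words of length `n`
by their reduction gives the sum formula.
-/

instance (p w : List Bool) : Finite (Occ p w) := by
  unfold Occ; infer_instance

theorem length_le_numOcc_mul_of_primitive {p w : List Bool} (hw : Primitive p w) :
    w.length ≤ numOcc p w * p.length := by
  classical
  have := Fintype.ofFinite (Occ p w)
  have hcover : (Finset.univ : Finset (Fin w.length)) ⊆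
      Finset.univ.biUnion fun g : Occ p w => Finset.univ.image g.1 := by
    intro i _
    obtain ⟨g, j, hj⟩ := hw i
    exact Finset.mem_biUnion.2 ⟨g, Finset.mem_univ _, Finset.mem_image.2 ⟨j, Finset.mem_univ _, hj⟩⟩
  calc w.length = (Finset.univ : Finset (Fin w.length)).card := by simp
    _ ≤ ∑ g : Occ p w, (Finset.univ.image g.1).card :=
        (Finset.card_le_card hcover).trans Finset.card_biUnion_le
    _ ≤ ∑ _g : Occ p w, p.length :=
        Finset.sum_le_sum fun g _ => Finset.card_image_le.trans (by simp)
    _ = numOcc p w * p.length := by simp [numOcc, Nat.card_eq_fintype_card]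

section OccMap

variable {p u v : List Bool} {e : Fin u.length → Fin v.length}

def Occ.map (he : StrictMono e) (hget : ∀ i, v.get (e i) = u.get i) (f : Occ p u) : Occ p v :=
  ⟨e ∘ f.1, he.comp f.2.1, fun j => (hget (f.1 j)).trans (f.2.2 j)⟩

theorem Occ.map_bijective (he : StrictMono e) (hget : ∀ i, v.get (e i) = u.get i)
    (hcover : ∀ (g : Occ p v) j, g.1 j ∈ Set.range e) :
    Function.Bijective (Occ.map (p := p) he hget) := by
  refine ⟨fun f f' h => Subtype.ext (funext fun j => he.injective ?_), fun g => ?_⟩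
  · exact congrFun (congrArg Subtype.val h) j
  · choose c hc using hcover g
    refine ⟨⟨c, fun j j' hjj' => ?_, fun j => ?_⟩, Subtype.ext (funext hc)⟩
    · rw [← he.lt_iff_lt, hc, hc]
      exact g.2.1 hjj'
    · rw [← hget, hc, g.2.2 j]

end OccMap

open Classical in
noncomputable def coveredIndices (p v : List Bool) : List (Fin v.length) :=
  (List.finRange v.length).filter fun i => decide (∃ g : Occ p v, ∃ j, g.1 j = i)

theorem reduce_eq_map_coveredIndices (p v : List Bool) :
    reduce p v = (coveredIndices p v).map v.get := rfl

theorem mem_coveredIndices {p v : List Bool} {i : Fin v.length} :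
    i ∈ coveredIndices p v ↔ ∃ g : Occ p v, ∃ j, g.1 j = i := by
  simp [coveredIndices]

theorem length_reduce (p v : List Bool) :
    (reduce p v).length = (coveredIndices p v).length := by
  simp [reduce_eq_map_coveredIndices]

theorem length_reduce_le (p v : List Bool) : (reduce p v).length ≤ v.length := by
  rw [length_reduce]
  exact (List.length_filter_le _ _).trans_eq (List.length_finRange)

noncomputable def reduceEmbedding (p v : List Bool) (t : Fin (reduce p v).length) : Fin v.length :=
  (coveredIndices p v).get (Fin.cast (length_reduce p v) t)

theorem reduceEmbedding_strictMono (p v : List Bool) : StrictMono (reduceEmbedding p v) := by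
  have hsorted : (coveredIndices p v).Pairwise (· < ·) :=
    (List.pairwise_lt_finRange _).sublist List.filter_sublist
  exact hsorted.sortedLT.strictMono_get.comp fun _ _ h => h

theorem get_reduceEmbedding (p v : List Bool) (t : Fin (reduce p v).length) :
    v.get (reduceEmbedding p v t) = (reduce p v).get t := by
  rcases t with ⟨t, ht⟩
  simp only [reduceEmbedding, reduce_eq_map_coveredIndices, List.get_eq_getElem, List.getElem_map]
  rfl

theorem range_reduceEmbedding (p v : List Bool) :
    Set.range (reduceEmbedding p v) = {i | ∃ g : Occ p v, ∃ j, g.1 j = i} := by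
  ext i
  rw [Set.mem_ofPred_eq, ← mem_coveredIndices, List.mem_iff_get]
  exact ⟨fun ⟨t, ht⟩ => ⟨_, ht⟩, fun ⟨t, ht⟩ => ⟨Fin.cast (length_reduce p v).symm t, ht⟩⟩

theorem Occ.map_reduceEmbedding_bijective (p v : List Bool) :
    Function.Bijective
      (Occ.map (p := p) (reduceEmbedding_strictMono p v) (get_reduceEmbedding p v)) :=
  Occ.map_bijective _ _ fun g j => by rw [range_reduceEmbedding]; exact ⟨g, j, rfl⟩

theorem numOcc_reduce (p v : List Bool) : numOcc p (reduce p v) = numOcc p v :=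
  Nat.card_congr (Equiv.ofBijective _ (Occ.map_reduceEmbedding_bijective p v))

theorem primitive_reduce (p v : List Bool) : Primitive p (reduce p v) := by
  intro t
  obtain ⟨g, j, hj⟩ : reduceEmbedding p v t ∈ {i | ∃ g : Occ p v, ∃ j, g.1 j = i} := by
    rw [← range_reduceEmbedding]; exact ⟨t, rfl⟩
  obtain ⟨f, rfl⟩ := (Occ.map_reduceEmbedding_bijective p v).2 g
  exact ⟨f, j, (reduceEmbedding_strictMono p v).injective hj⟩

theorem Nat.card_eq_sum_card_fiber {α β : Type*} {P Q : α → Prop}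
    (hQ : {a | Q a}.Finite) (f : α → β) (t : Finset β) (hP : ∀ a, P a ↔ Q a ∧ f a ∈ t) :
    Nat.card {a // P a} = ∑ b ∈ t, Nat.card {a // Q a ∧ f a = b} := by
  classical
  have hcard : ∀ R : α → Prop, (∀ a, R a → Q a) →
      Nat.card {a // R a} = (hQ.toFinset.filter R).card := fun R hR => by
    rw [← Nat.card_eq_finsetCard]
    exact Nat.card_congr (Equiv.subtypeEquivRight fun a => by simpa using hR a)
  rw [hcard P fun a h => ((hP a).1 h).1, Finset.card_eq_sum_card_fiberwise (f := f)
    fun a ha => ((hP a).1 (Finset.mem_filter.1 ha).2).2]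
  refine Finset.sum_congr rfl fun b hb => ?_
  rw [hcard _ fun a h => h.1]
  congr 1
  ext a
  simp only [Finset.mem_filter]
  exact ⟨fun ⟨⟨ha, hPa⟩, hfa⟩ => ⟨ha, ((hP a).1 hPa).1, hfa⟩,
    fun ⟨ha, hQa, hfa⟩ => ⟨⟨ha, (hP a).2 ⟨hQa, hfa ▸ hb⟩⟩, hfa⟩⟩

theorem stmt18_general (p : List Bool) (k : ℕ) (n : ℕ) :
    (∀ w : List Bool, Primitive p w → numOcc p w = k →
      w.length ≤ p.length + (k - 1) * p.length) ∧
    ∃ hfin : {w : List Bool | w.length ≤ n ∧ numOcc p w = k ∧ Primitive p w}.Finite,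
      Nat.card {v : List Bool // v.length = n ∧ numOcc p v = k} =
        ∑ w ∈ hfin.toFinset,
          Nat.card {v : List Bool // v.length = n ∧ reduce p v = w} := by
  refine ⟨fun w hw hk => ?_, ?_⟩
  · calc w.length ≤ k * p.length := hk ▸ length_le_numOcc_mul_of_primitive hw
      _ ≤ p.length + (k - 1) * p.length := by cases k <;> simp [add_mul, add_comm]
  · have hfin : {w : List Bool | w.length ≤ n ∧ numOcc p w = k ∧ Primitive p w}.Finite :=
      (List.finite_length_le Bool n).subset fun w hw => hw.1
    refine ⟨hfin, Nat.card_eq_sum_card_fiber (List.finite_length_eq Bool n) _ _ fun v => ?_⟩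
    rw [Set.Finite.mem_toFinset, Set.mem_ofPred_eq, numOcc_reduce]
    exact ⟨fun ⟨hv, hk⟩ => ⟨hv, (length_reduce_le p v).trans_eq hv, hk, primitive_reduce p v⟩,
      fun ⟨hv, _, hk, _⟩ => ⟨hv, hk⟩⟩

theorem stmt18 (p : List Bool) (k : ℕ) (hk : 1 ≤ k) (n : ℕ) :
    (∀ w : List Bool, Primitive p w → numOcc p w = k →
      w.length ≤ p.length + (k - 1) * p.length) ∧
    ∃ hfin : {w : List Bool | w.length ≤ n ∧ numOcc p w = k ∧ Primitive p w}.Finite,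
      Nat.card {v : List Bool // v.length = n ∧ numOcc p v = k} =
        ∑ w ∈ hfin.toFinset,
          Nat.card {v : List Bool // v.length = n ∧ reduce p v = w} :=
  stmt18_general p k n
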